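/- arXiv:2002.07331 — 2 statements merged into one kernel-verified Lean document; each statement's English description precedes it below -/
import Mathlib

section
/- For any real numbers a ≥ 1, b ≥ 1 with a ≤ b, and any α ∈ (0,1], if τ = ⌈(a-1)/((b-1)α)⌉ (with b > 1), then 1 - (1-α)^τ ≥ (a-1)/(1.59(b-1)). -/
theorem one_sub_pow_ceil_ge (a b α : ℝ) (ha : 1 ≤ a) (hb : 1 ≤ b) (hab : a ≤ b)
    (hb1 : 1 < b) (hα0 : 0 < α) (hα1 : α ≤ 1)
    (τ : ℕ) (hτ : τ = ⌈(a - 1) / ((b - 1) * α)⌉₊) :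
    1 - (1 - α) ^ τ ≥ (a - 1) / (1.59 * (b - 1)) := by
  have hb0 : (0:ℝ) < b - 1 := by linarith
  set t : ℝ := (a - 1) / (b - 1) with ht_def
  have ht0 : 0 ≤ t := div_nonneg (by linarith) hb0.le
  have ht1 : t ≤ 1 := by
    rw [div_le_one hb0]; linarith
  -- τ ≥ (a-1)/((b-1)α), hence α * τ ≥ t
  have hx : (a - 1) / ((b - 1) * α) ≤ (τ : ℝ) := hτ ▸ Nat.le_ceil _
  have htτ : t ≤ α * τ := by
    rw [ht_def, div_le_iff₀ hb0]
    have := mul_le_mul_of_nonneg_left hx hα0.le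
    calc a - 1 = α * ((a - 1) / ((b - 1) * α)) * (b - 1) := by
          field_simp
      _ ≤ α * τ * (b - 1) := by
          apply mul_le_mul_of_nonneg_right _ hb0.le
          exact mul_le_mul_of_nonneg_left hx hα0.le
  -- (1-α)^τ ≤ exp(-t)
  have hpow : (1 - α) ^ τ ≤ Real.exp (-t) := by
    have h1 : (1 - α) ^ τ ≤ Real.exp (-α) ^ τ := by
      apply pow_le_pow_left₀ (by linarith)
      linarith [Real.add_one_le_exp (-α)]
    have h2 : Real.exp (-α) ^ τ = Real.exp (-(α * τ)) := by
      rw [← Real.exp_nat_mul]; ring_nf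
    have h3 : Real.exp (-(α * τ)) ≤ Real.exp (-t) := by
      apply Real.exp_le_exp.2; linarith
    linarith
  -- convexity: exp(-t) ≤ (1-t) + t * exp(-1)
  have hconv : Real.exp (-t) ≤ (1 - t) + t * Real.exp (-1) := by
    have := convexOn_exp.2 (Set.mem_univ (0:ℝ)) (Set.mem_univ (-1:ℝ))
      (by linarith : (0:ℝ) ≤ 1 - t) ht0 (by ring)
    simpa [Real.exp_zero, mul_comm] using this
  -- exp(-1) ≤ 0.59/1.59
  have hexp1 : Real.exp (-1) ≤ 0.59 / 1.59 := by
    rw [Real.exp_neg]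
    calc (Real.exp 1)⁻¹ ≤ (2.7:ℝ)⁻¹ := by
          apply inv_anti₀ (by norm_num)
          linarith [Real.exp_one_gt_d9]
      _ ≤ 0.59/1.59 := by norm_num
  have hkey : t / 1.59 ≤ 1 - Real.exp (-t) := by
    have : Real.exp (-t) ≤ 1 - t * (1 - 0.59/1.59) := by
      have := mul_le_mul_of_nonneg_left hexp1 ht0
      linarith
    have h159 : (1:ℝ) - 0.59/1.59 = 1/1.59 := by norm_num
    rw [h159] at this
    have heq : t / 1.59 = t * (1/1.59) := by ring
    linarith
  have hRHS : (a - 1) / (1.59 * (b - 1)) = t / 1.59 := by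
    rw [ht_def, div_div, mul_comm]
  rw [ge_iff_le, hRHS]
  linarith
end

section
/- Let 0 < δ ≤ 1, let ρ be a real with q := 1 - F_H(ρ) ∈ (0,1], let C ≥ 0, and let n₀ = 1 + C·log(2/δ)/q and n ≥ n₀ be an integer with n ≥ 2. Suppose each of n-1 bidders independently both (a) participates in at least one of the first τ = ⌈(n₀-1)/((n-1)α)⌉ rounds with probability at least 1-(1-α)^τ (α ∈ (0,1]) and (b) has valuation exceeding ρ with probability q. Then the probability that no bidder both participates among the first τ rounds and has valuation exceeding ρ is at most (δ/2)^{C/1.59}. -/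
/-! Each of the `n - 1` independent events has probability at least `p = (1 - (1 - α) ^ τ) q`,
so none of them occurs with probability at most `(1 - p) ^ (n - 1) ≤ exp (-(n - 1) p)`.
The choice of `τ` gives `α τ ≥ t := (n₀ - 1) / (n - 1) ∈ [0, 1]`, and concavity of
`t ↦ 1 - exp (-t)` gives `1 - (1 - α) ^ τ ≥ 1 - exp (-t) ≥ (1 - e⁻¹) t ≥ t / 1.59`.
Hence `(n - 1) p ≥ (n₀ - 1) q / 1.59 = C log (2 / δ) / 1.59`, and
`exp (-C log (2 / δ) / 1.59) = (δ / 2) ^ (C / 1.59)`. -/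

open MeasureTheory ProbabilityTheory

namespace Real

theorem one_sub_exp_neg_one_mul_le_one_sub_exp_neg {t : ℝ} (h0 : 0 ≤ t) (h1 : t ≤ 1) :
    (1 - exp (-1)) * t ≤ 1 - exp (-t) := by
  have := convexOn_exp.2 (Set.mem_univ 0) (Set.mem_univ (-1)) (sub_nonneg.2 h1) h0 (by ring)
  simp only [smul_eq_mul, mul_zero, zero_add, exp_zero, mul_one, mul_neg] at this
  linarith

theorem one_sub_pow_le_exp_neg_mul {α : ℝ} (h1 : α ≤ 1) (τ : ℕ) :
    (1 - α) ^ τ ≤ exp (-(α * τ)) :=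
  calc (1 - α) ^ τ ≤ exp (-α) ^ τ :=
        pow_le_pow_left₀ (by linarith) (one_sub_le_exp_neg α) τ
    _ = exp (-(α * τ)) := by rw [← exp_nat_mul]; ring_nf

theorem one_sub_exp_neg_one_mul_le_one_sub_one_sub_pow {α t : ℝ} (hα1 : α ≤ 1) {τ : ℕ}
    (ht0 : 0 ≤ t) (ht1 : t ≤ 1) (hτ : t ≤ α * τ) :
    (1 - exp (-1)) * t ≤ 1 - (1 - α) ^ τ := by
  have := one_sub_pow_le_exp_neg_mul hα1 τ
  have := exp_le_exp.2 (neg_le_neg hτ)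
  linarith [one_sub_exp_neg_one_mul_le_one_sub_exp_neg ht0 ht1]

theorem div_le_mul_one_sub_one_sub_pow_ceil {s m α : ℝ} (hs : 0 ≤ s) (hsm : s ≤ m)
    (hα0 : 0 < α) (hα1 : α ≤ 1) :
    s / 1.59 ≤ m * (1 - (1 - α) ^ ⌈s / (m * α)⌉₊) := by
  obtain rfl | hm := (hs.trans hsm).eq_or_lt
  · simp [le_antisymm hsm hs]
  set t := s / m
  have ht0 : 0 ≤ t := div_nonneg hs hm.le
  have ht1 : t ≤ 1 := div_le_one_of_le₀ hsm hm.le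
  have htτ : t ≤ α * ⌈s / (m * α)⌉₊ := by
    rw [← div_le_iff₀' hα0, div_div]
    exact Nat.le_ceil _
  have h159 : 1 / 1.59 ≤ 1 - exp (-1) := by linarith [exp_neg_one_lt_d9]
  have hmt : m * t = s := mul_div_cancel₀ s hm.ne'
  calc s / 1.59 = m * (1 / 1.59 * t) := by rw [← hmt]; ring
    _ ≤ m * ((1 - exp (-1)) * t) := by gcongr
    _ ≤ m * (1 - (1 - α) ^ ⌈s / (m * α)⌉₊) :=
      mul_le_mul_of_nonneg_left (one_sub_exp_neg_one_mul_le_one_sub_one_sub_pow hα1 ht0 ht1 htτ)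
        hm.le

end Real

theorem measure_iInter_compl_le_exp_neg {Ω ι : Type*} [MeasurableSpace Ω] [Fintype ι]
    {μ : Measure Ω} [IsProbabilityMeasure μ] {E : ι → Set Ω}
    (hEm : ∀ j, MeasurableSet (E j)) (hind : iIndepSet E μ) {p : ℝ} (hp0 : 0 ≤ p)
    (hp : ∀ j, ENNReal.ofReal p ≤ μ (E j)) :
    μ (⋂ j, (E j)ᶜ) ≤ ENNReal.ofReal (Real.exp (-(Fintype.card ι * p))) := by
  have hcompl : ∀ j, μ (E j)ᶜ ≤ ENNReal.ofReal (Real.exp (-p)) := fun j =>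
    calc μ (E j)ᶜ = 1 - μ (E j) := prob_compl_eq_one_sub (hEm j)
      _ ≤ 1 - ENNReal.ofReal p := tsub_le_tsub_left (hp j) 1
      _ = ENNReal.ofReal (1 - p) := by rw [ENNReal.ofReal_sub _ hp0, ENNReal.ofReal_one]
      _ ≤ ENNReal.ofReal (Real.exp (-p)) := ENNReal.ofReal_le_ofReal (Real.one_sub_le_exp_neg p)
  -- `(E j)ᶜ` is measurable for the `σ`-algebra generated by `E j`
  have hmeas : μ (⋂ j, (E j)ᶜ) = ∏ j, μ (E j)ᶜ :=
    ((iIndepSet_iff_iIndep E μ).1 hind).meas_iInter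
      fun _ => (MeasurableSpace.measurableSet_generateFrom (Set.mem_singleton _)).compl
  calc μ (⋂ j, (E j)ᶜ) = ∏ j, μ (E j)ᶜ := hmeas
    _ ≤ ∏ _j : ι, ENNReal.ofReal (Real.exp (-p)) := Finset.prod_le_prod' fun j _ => hcompl j
    _ = ENNReal.ofReal (Real.exp (-(Fintype.card ι * p))) := by
      rw [Finset.prod_const, Finset.card_univ, ← ENNReal.ofReal_pow (Real.exp_pos _).le,
        ← Real.exp_nat_mul]
      ring_nf

theorem no_high_bidder_prob_le_general {Ω : Type*} [MeasurableSpace Ω]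
    (μ : Measure Ω) [IsProbabilityMeasure μ]
    (δ q C α n₀ : ℝ) (n : ℕ)
    (hδ0 : 0 < δ) (hδ1 : δ ≤ 1) (hq0 : 0 < q) (hC : 0 ≤ C)
    (hn₀ : n₀ = 1 + C * Real.log (2 / δ) / q)
    (hn : n₀ ≤ (n : ℝ))
    (hα0 : 0 < α) (hα1 : α ≤ 1)
    (τ : ℕ) (hτ : τ = ⌈(n₀ - 1) / (((n : ℝ) - 1) * α)⌉₊)
    -- `E j` : the event that bidder `j ≠ i` both participates in one of the
    -- first `τ` rounds and has valuation exceeding `ρ`.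
    (E : Fin (n - 1) → Set Ω) (hEm : ∀ j, MeasurableSet (E j))
    (hind : iIndepSet E μ)
    (hp : ∀ j, ENNReal.ofReal ((1 - (1 - α) ^ τ) * q) ≤ μ (E j)) :
    μ (⋂ j, (E j)ᶜ) ≤ ENNReal.ofReal ((δ / 2) ^ (C / 1.59)) := by
  set L := Real.log (2 / δ)
  have hL : 0 ≤ L := Real.log_nonneg (by rw [le_div_iff₀ hδ0]; linarith)
  have hs : 0 ≤ n₀ - 1 := by
    have : 0 ≤ C * L / q := by positivity
    linarith
  have hn1 : 1 ≤ n := by exact_mod_cast (by linarith : (1 : ℝ) ≤ n)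
  have hkey := Real.div_le_mul_one_sub_one_sub_pow_ceil hs
    (by linarith : n₀ - 1 ≤ (n : ℝ) - 1) hα0 hα1
  rw [← hτ] at hkey
  have hp0 : 0 ≤ (1 - (1 - α) ^ τ) * q :=
    mul_nonneg (sub_nonneg.2 (pow_le_one₀ (by linarith) (by linarith))) hq0.le
  have hnp : L * (C / 1.59) ≤ ((n - 1 : ℕ) : ℝ) * ((1 - (1 - α) ^ τ) * q) := by
    rw [Nat.cast_sub hn1, Nat.cast_one, ← mul_assoc]
    calc L * (C / 1.59) = (n₀ - 1) / 1.59 * q := by rw [hn₀]; field_simp; ring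
      _ ≤ _ := by gcongr
  refine (measure_iInter_compl_le_exp_neg hEm hind hp0 hp).trans (ENNReal.ofReal_le_ofReal ?_)
  have hlog : Real.log (δ / 2) = -L := by rw [← Real.log_inv, inv_div]
  rw [Fintype.card_fin, Real.rpow_def_of_pos (by positivity), hlog]
  exact Real.exp_le_exp.2 (by rw [neg_mul]; exact neg_le_neg hnp)

theorem no_high_bidder_prob_le {Ω : Type*} [MeasurableSpace Ω]
    (μ : Measure Ω) [IsProbabilityMeasure μ]
    (δ q C α n₀ : ℝ) (n : ℕ)
    (hδ0 : 0 < δ) (hδ1 : δ ≤ 1) (hq0 : 0 < q) (hq1 : q ≤ 1) (hC : 0 ≤ C)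
    (hn₀ : n₀ = 1 + C * Real.log (2 / δ) / q)
    (hn : n₀ ≤ (n : ℝ)) (hn2 : 2 ≤ n)
    (hα0 : 0 < α) (hα1 : α ≤ 1)
    (τ : ℕ) (hτ : τ = ⌈(n₀ - 1) / (((n : ℝ) - 1) * α)⌉₊)
    -- `E j` : the event that bidder `j ≠ i` both participates in one of the
    -- first `τ` rounds and has valuation exceeding `ρ`.
    (E : Fin (n - 1) → Set Ω) (hEm : ∀ j, MeasurableSet (E j))
    (hind : iIndepSet E μ)
    (hp : ∀ j, ENNReal.ofReal ((1 - (1 - α) ^ τ) * q) ≤ μ (E j)) :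
    μ (⋂ j, (E j)ᶜ) ≤ ENNReal.ofReal ((δ / 2) ^ (C / 1.59)) :=
  no_high_bidder_prob_le_general μ δ q C α n₀ n hδ0 hδ1 hq0 hC hn₀ hn hα0 hα1 τ hτ E hEm hind hp
end
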